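/- arXiv:2212.14818 — 2 statements merged into one kernel-verified Lean document; each statement's English description precedes it below -/
import Mathlib

section
/- Let μ₁ and μ₂ be finite positive Borel measures on ∂𝔻, each singular with respect to arc-length measure, and mutually singular with respect to each other; let g ∈ L¹(∂𝔻, m) be real-valued. Define on 𝔻 the singular inner functions S_{μ_i}(z) = exp(−∫_{∂𝔻} (ζ+z)/(ζ−z) dμ_i(ζ)) for i = 1, 2, the outer function O(z) = exp(∫_{∂𝔻} (ζ+z)/(ζ−z) g(ζ) dm(ζ)), and f = (S_{μ₁}/S_{μ₂})·O. Then the radial limits satisfy lim_{r→1⁻} f(rζ) = 0 for μ₁-a.e. ζ ∈ ∂𝔻, and lim_{r→1⁻} |f(rζ)| = ∞ for μ₂-a.e. ζ ∈ ∂𝔻. -/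
open MeasureTheory Filter Set Metric Topology Complex
open scoped ENNReal

noncomputable section

/-- The open unit disk in ℂ. -/
def unitDisk : Set ℂ := Metric.ball 0 1

/-- The unit circle in ℂ. -/
def unitCircle : Set ℂ := Metric.sphere 0 1

/-- Arclength measure on the unit circle (total mass `2 * π`), as a measure on ℂ. -/
def circleLen : Measure ℂ :=
  (volume.restrict (Set.Ioc (0:ℝ) (2*Real.pi))).map (fun t : ℝ => Complex.exp (t * Complex.I))

/-- Normalized arclength measure `m` on the unit circle. -/
def circleM : Measure ℂ := (ENNReal.ofReal (2*Real.pi))⁻¹ • circleLen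

/-- The closed support of a measure on ℂ. -/
def measSupport (μ : Measure ℂ) : Set ℂ := {x : ℂ | ∀ U ∈ nhds x, 0 < μ U}

/-- Open arc of the unit circle centered at `x` of half-length `ε`. -/
def arcC (x : ℂ) (ε : ℝ) : Set ℂ :=
  {z : ℂ | ∃ t : ℝ, |t| < ε ∧ z = Complex.exp (t * Complex.I) * x}

/-- Right arc `I^R(x, ε) = {e^{it} x : 0 ≤ t < ε}`. -/
def arcR (x : ℂ) (ε : ℝ) : Set ℂ :=
  {z : ℂ | ∃ t : ℝ, 0 ≤ t ∧ t < ε ∧ z = Complex.exp (t * Complex.I) * x}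

/-- Left arc `I^L(x, ε) = {e^{-it} x : 0 ≤ t < ε}`. -/
def arcL (x : ℂ) (ε : ℝ) : Set ℂ :=
  {z : ℂ | ∃ t : ℝ, 0 ≤ t ∧ t < ε ∧ z = Complex.exp (-(t * Complex.I)) * x}

/-- Open arc of length `L` starting (and excluding) `y`. -/
def arcFrom (y : ℂ) (L : ℝ) : Set ℂ :=
  {z : ℂ | ∃ t : ℝ, 0 < t ∧ t < L ∧ z = Complex.exp (t * Complex.I) * y}

/-- Poisson kernel for the unit disk: `P_z(ζ) = (1 - |z|²)/|ζ - z|²`. -/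
def poissonK (z ζ : ℂ) : ℝ := (1 - ‖z‖ ^ 2) / ‖ζ - z‖ ^ 2

/-- A Beurling–Carleson set: a closed subset of the unit circle of zero arclength measure
whose complementary arcs `I_k` (the connected components of the complement in the circle)
satisfy `Σ |I_k| log (1/|I_k|) < ∞`. -/
def IsBeurlingCarleson (E : Set ℂ) : Prop :=
  IsClosed E ∧ E ⊆ unitCircle ∧ circleM E = 0 ∧
    ∑' J : {C : Set ℂ // ∃ z ∈ unitCircle \ E, C = connectedComponentIn (unitCircle \ E) z},
      circleM (J : Set ℂ) * ENNReal.ofReal (Real.log (1 / (circleM (J : Set ℂ)).toReal)) < ⊤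

/-- An inner function: a holomorphic self-map of the unit disk whose radial limits exist
and have modulus one at a.e. point of the unit circle. -/
def IsInner (F : ℂ → ℂ) : Prop :=
  DifferentiableOn ℂ F unitDisk ∧ Set.MapsTo F unitDisk unitDisk ∧
    ∀ᵐ ζ ∂circleM, ∃ L : ℂ,
      Filter.Tendsto (fun r : ℝ => F ((r : ℂ) * ζ)) (𝓝[<] (1:ℝ)) (𝓝 L) ∧ ‖L‖ = 1

/-- A Jordan curve: the image of a continuous injective map of the unit circle. -/
def IsJordanCurve (C : Set ℂ) : Prop :=
  ∃ f : ℂ → ℂ, ContinuousOn f unitCircle ∧ Set.InjOn f unitCircle ∧ f '' unitCircle = C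

/-- A Jordan domain: a bounded, open, connected, simply connected set whose boundary
is a Jordan curve. -/
def IsJordanDomain (Ω : Set ℂ) : Prop :=
  IsOpen Ω ∧ IsConnected Ω ∧ Bornology.IsBounded Ω ∧ SimplyConnectedSpace ↥Ω ∧
    IsJordanCurve (frontier Ω)

/-- Stolz region at `q ∈ ∂𝔻` of aperture `M` in the unit disk. -/
def stolzAt (q : ℂ) (M : ℝ) : Set ℂ :=
  {z : ℂ | ‖z‖ < 1 ∧ ‖z - q‖ ≤ M * (1 - ‖z‖)}

/-- The open upper half-plane, as a subset of ℂ. -/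
def upperHP : Set ℂ := {z : ℂ | 0 < z.im}

/-- The cone `{z ∈ ℍ : |Re z| ≤ M Im z}` at 0. -/
def coneAt (M : ℝ) : Set ℂ := {z : ℂ | 0 < z.im ∧ |z.re| ≤ M * z.im}

/-- A domain `W ⊆ ℍ` with `0 ∈ ∂W` is thick at 0 if some Riemann map `φ : ℍ → W`
has a nonzero angular derivative at 0. -/
def ThickAtZeroH (W : Set ℂ) : Prop :=
  ∃ (φ : ℂ → ℂ) (α : ℝ), 0 < α ∧
    DifferentiableOn ℂ φ upperHP ∧ Set.BijOn φ upperHP W ∧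
    ∀ M : ℝ, 0 < M →
      Filter.Tendsto φ (𝓝[coneAt M] 0) (𝓝 0) ∧
      Filter.Tendsto (fun z => φ z / z) (𝓝[coneAt M] 0) (𝓝 (α : ℂ))

/-- A simply connected domain `Ω ⊆ 𝔻` is thick at `p ∈ ∂Ω ∩ ∂𝔻` if some Riemann map
`φ : 𝔻 → Ω` has a nonzero angular derivative at `p`. -/
def ThickAtD (Ω : Set ℂ) (p : ℂ) : Prop :=
  ∃ (φ : ℂ → ℂ) (q α : ℂ), ‖q‖ = 1 ∧ α ≠ 0 ∧
    DifferentiableOn ℂ φ unitDisk ∧ Set.BijOn φ unitDisk Ω ∧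
    ∀ M : ℝ, 0 < M →
      Filter.Tendsto φ (𝓝[stolzAt q M] q) (𝓝 p) ∧
      Filter.Tendsto (fun z => (φ z - p) / (z - q)) (𝓝[stolzAt q M] q) (𝓝 α)

end

/-!
On the circle `Re ((ζ + z) / (ζ - z))` is the Poisson kernel, so `log ‖f (r * ζ)‖` lies between
`P[μ₂] - P[μ₁ + |g| m]` and `P[μ₂ + |g| m] - P[μ₁]` at `r * ζ`, where `P[σ] = poissonIntegral σ`
is the Poisson integral of `σ`. It therefore suffices that `P[ν] (r * ζ) - P[μ] (r * ζ) → -∞`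
for `μ`-a.e. `ζ` whenever `ν ⟂ μ` and `m ⟂ μ`. By Besicovitch differentiation, at such `ζ`
both `ν (B(ζ, s)) / μ (B(ζ, s))` and `m (B(ζ, s)) / μ (B(ζ, s))` tend to `0`. The second gives
`μ (B(ζ, s)) / s → ∞`, hence `P[μ] (r * ζ) ≥ μ (B(ζ, 1 - r)) / (1 - r) → ∞`. For the first: on
the circle the superlevel sets of the Poisson kernel at `r * ζ` are arcs centred at `ζ`, so by
the layer-cake formula `ν (B) ≤ μ (B) / 2` on small balls yields
`P[ν] (r * ζ) ≤ P[μ] (r * ζ) / 2 + O(1)`.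
-/

section LayerCake

variable {α : Type*} [MeasurableSpace α] {μ ν : Measure α} {K : α → ℝ}

theorem lintegral_ofReal_le_of_measure_superlevel_le (hK : Measurable K) (hKμ : 0 ≤ᵐ[μ] K)
    (hKν : 0 ≤ᵐ[ν] K) (ε : ℝ≥0∞) (T : ℝ)
    (h : ∀ᵐ t, T < t → ν {a | t ≤ K a} ≤ ε * μ {a | t ≤ K a}) :
    ∫⁻ a, ENNReal.ofReal (K a) ∂ν ≤
      ε * ∫⁻ a, ENNReal.ofReal (K a) ∂μ + ENNReal.ofReal T * ν univ := by
  rw [lintegral_eq_lintegral_meas_le ν hKν hK.aemeasurable,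
    lintegral_eq_lintegral_meas_le μ hKμ hK.aemeasurable]
  have hanti : Antitone fun t : ℝ => μ {a | t ≤ K a} :=
    fun _ _ hst => measure_mono fun _ ha => hst.trans ha
  calc ∫⁻ t in Ioi 0, ν {a | t ≤ K a}
      ≤ ∫⁻ t in Ioi 0, ((Iic T).indicator (fun _ => ν univ) t + ε * μ {a | t ≤ K a}) := by
        refine lintegral_mono_ae (ae_restrict_of_ae ?_)
        filter_upwards [h] with t ht
        by_cases htT : t ≤ T
        · rw [indicator_of_mem (mem_Iic.2 htT)]
          exact le_add_right (measure_mono (subset_univ _))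
        · rw [indicator_of_notMem (notMem_Iic.2 (not_le.mp htT)), zero_add]
          exact ht (not_le.mp htT)
    _ = ε * (∫⁻ t in Ioi 0, μ {a | t ≤ K a}) + ENNReal.ofReal T * ν univ := by
        rw [lintegral_add_left (measurable_const.indicator measurableSet_Iic),
          lintegral_indicator measurableSet_Iic, setLIntegral_const,
          Measure.restrict_apply measurableSet_Iic, Iic_inter_Ioi, Real.volume_Ioc, sub_zero,
          lintegral_const_mul _ hanti.measurable]
        ring

end LayerCake

lemma ae_norm_eq_one {σ : Measure ℂ} (hσ : σ unitCircleᶜ = 0) : ∀ᵐ a ∂σ, ‖a‖ = 1 :=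
  (ae_iff.2 hσ : ∀ᵐ a ∂σ, a ∈ unitCircle).mono fun _ => mem_sphere_zero_iff_norm.mp

lemma norm_ofReal_mul_of_norm_eq_one {ζ : ℂ} (hζ : ‖ζ‖ = 1) {r : ℝ} (hr : 0 ≤ r) :
    ‖(r : ℂ) * ζ‖ = r := by
  rw [norm_mul, Complex.norm_real, Real.norm_of_nonneg hr, hζ, mul_one]

lemma norm_ofReal_mul_lt_one {ζ : ℂ} (hζ : ‖ζ‖ = 1) {r : ℝ} (hr : r ∈ Ioo 0 1) :
    ‖(r : ℂ) * ζ‖ < 1 := by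
  rw [norm_ofReal_mul_of_norm_eq_one hζ hr.1.le]
  exact hr.2

section PoissonKernel

variable {a z ζ : ℂ}

lemma re_add_div_sub_eq_poissonK (ha : ‖a‖ = 1) (z : ℂ) :
    ((a + z) / (a - z)).re = poissonK z a := by
  have := congrFun (poissonKernel_eq_re_herglotzRieszKernel (c := 0) (w := z)) a
  simp only [poissonKernel, herglotzRieszKernel, Function.comp_apply, sub_zero] at this
  rw [← this, poissonK, ha, one_pow]

lemma measurable_poissonK (z : ℂ) : Measurable (poissonK z) := by
  unfold poissonK; fun_prop

lemma poissonK_nonneg (hz : ‖z‖ ≤ 1) (a : ℂ) : 0 ≤ poissonK z a :=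
  div_nonneg (by nlinarith [norm_nonneg z]) (sq_nonneg _)

lemma norm_add_div_sub_le (ha : ‖a‖ = 1) (hz : ‖z‖ < 1) :
    ‖(a + z) / (a - z)‖ ≤ 2 / (1 - ‖z‖) := by
  rw [norm_div]
  refine div_le_div₀ zero_le_two ?_ (by linarith) ?_
  · linarith [norm_add_le a z]
  · linarith [norm_sub_norm_le a z]

lemma poissonK_le (ha : ‖a‖ = 1) (hz : ‖z‖ < 1) : poissonK z a ≤ 2 / (1 - ‖z‖) :=
  re_add_div_sub_eq_poissonK ha z ▸ (Complex.re_le_norm _).trans (norm_add_div_sub_le ha hz)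

lemma poissonK_ofReal_mul (ha : ‖a‖ = 1) (hζ : ‖ζ‖ = 1) (r : ℝ) :
    poissonK ((r : ℂ) * ζ) a = (1 - r ^ 2) / ((1 - r) ^ 2 + r * ‖a - ζ‖ ^ 2) := by
  have ha' : normSq a = 1 := by rw [Complex.normSq_eq_norm_sq, ha, one_pow]
  have hζ' : normSq ζ = 1 := by rw [Complex.normSq_eq_norm_sq, hζ, one_pow]
  rw [poissonK, norm_mul, Complex.norm_real, Real.norm_eq_abs, hζ, mul_one, sq_abs]
  congr 1
  simp only [← Complex.normSq_eq_norm_sq, Complex.normSq_apply, Complex.sub_re, Complex.sub_im,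
    Complex.mul_re, Complex.mul_im, Complex.ofReal_re, Complex.ofReal_im] at *
  linear_combination (1 - r) * ha' + (r ^ 2 - r) * hζ'

lemma inv_one_sub_le_poissonK (ha : ‖a‖ = 1) (hζ : ‖ζ‖ = 1) {r : ℝ} (hr0 : 0 ≤ r)
    (hr1 : r < 1) (haζ : ‖a - ζ‖ ≤ 1 - r) : (1 - r)⁻¹ ≤ poissonK ((r : ℂ) * ζ) a := by
  rw [poissonK_ofReal_mul ha hζ]
  have hsq : ‖a - ζ‖ ^ 2 ≤ (1 - r) ^ 2 := pow_le_pow_left₀ (norm_nonneg _) haζ 2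
  rw [le_div_iff₀ (by nlinarith), inv_mul_le_iff₀ (by linarith)]
  nlinarith

lemma le_poissonK_iff (ha : ‖a‖ = 1) (hζ : ‖ζ‖ = 1) {r t : ℝ} (hr0 : 0 < r) (hr1 : r < 1)
    (ht : 0 < t) :
    t ≤ poissonK ((r : ℂ) * ζ) a ↔ ‖a - ζ‖ ^ 2 ≤ ((1 - r ^ 2) / t - (1 - r) ^ 2) / r := by
  rw [poissonK_ofReal_mul ha hζ, le_div_iff₀ (by positivity), le_div_iff₀ hr0,
    le_sub_iff_add_le (b := (1 - r) ^ 2), le_div_iff₀ ht]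
  constructor <;> intro h <;> nlinarith

end PoissonKernel

noncomputable def poissonIntegral (σ : Measure ℂ) (z : ℂ) : ℝ≥0∞ :=
  ∫⁻ a, ENNReal.ofReal (poissonK z a) ∂σ

section PoissonIntegral

variable {σ τ : Measure ℂ} {z : ℂ}

lemma poissonIntegral_le (hσ : σ unitCircleᶜ = 0) (hz : ‖z‖ < 1) :
    poissonIntegral σ z ≤ ENNReal.ofReal (2 / (1 - ‖z‖)) * σ univ := by
  rw [← lintegral_const]
  exact lintegral_mono_ae <| (ae_norm_eq_one hσ).mono fun a ha =>
    ENNReal.ofReal_le_ofReal (poissonK_le ha hz)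

lemma poissonIntegral_ne_top [IsFiniteMeasure σ] (hσ : σ unitCircleᶜ = 0) (hz : ‖z‖ < 1) :
    poissonIntegral σ z ≠ ∞ :=
  ((poissonIntegral_le hσ hz).trans_lt
    (ENNReal.mul_lt_top ENNReal.ofReal_lt_top (measure_lt_top _ _))).ne

lemma toReal_poissonIntegral_add [IsFiniteMeasure σ] [IsFiniteMeasure τ]
    (hσ : σ unitCircleᶜ = 0) (hτ : τ unitCircleᶜ = 0) (hz : ‖z‖ < 1) :
    (poissonIntegral (σ + τ) z).toReal =
      (poissonIntegral σ z).toReal + (poissonIntegral τ z).toReal := by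
  rw [poissonIntegral, lintegral_add_measure, ← poissonIntegral, ← poissonIntegral,
    ENNReal.toReal_add (poissonIntegral_ne_top hσ hz) (poissonIntegral_ne_top hτ hz)]

lemma integrable_add_div_sub [IsFiniteMeasure σ] (hσ : σ unitCircleᶜ = 0) (hz : ‖z‖ < 1) :
    Integrable (fun a => (a + z) / (a - z)) σ :=
  Integrable.mono' (integrable_const (2 / (1 - ‖z‖)))
    (by fun_prop : Measurable fun a : ℂ => (a + z) / (a - z)).aestronglyMeasurable
    ((ae_norm_eq_one hσ).mono fun _ ha => norm_add_div_sub_le ha hz)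

lemma toReal_poissonIntegral (hz : ‖z‖ ≤ 1) :
    (poissonIntegral σ z).toReal = ∫ a, poissonK z a ∂σ :=
  (integral_eq_lintegral_of_nonneg_ae (Eventually.of_forall (poissonK_nonneg hz))
    (measurable_poissonK z).aestronglyMeasurable).symm

lemma re_integral_add_div_sub [IsFiniteMeasure σ] (hσ : σ unitCircleᶜ = 0) (hz : ‖z‖ < 1) :
    (∫ a, (a + z) / (a - z) ∂σ).re = (poissonIntegral σ z).toReal := by
  rw [toReal_poissonIntegral hz.le, ← RCLike.re_to_complex,
    ← integral_re (integrable_add_div_sub hσ hz)]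
  exact integral_congr_ae ((ae_norm_eq_one hσ).mono fun a ha => re_add_div_sub_eq_poissonK ha z)

lemma abs_re_integral_add_div_sub_mul_le [IsFiniteMeasure σ] (hσ : σ unitCircleᶜ = 0)
    {g : ℂ → ℝ} (hg : Integrable g σ) (hz : ‖z‖ < 1) :
    |(∫ a, (a + z) / (a - z) * (g a : ℂ) ∂σ).re| ≤
      (poissonIntegral (σ.withDensity fun a => ENNReal.ofReal |g a|) z).toReal := by
  have hint : Integrable (fun a => (a + z) / (a - z) * (g a : ℂ)) σ :=
    hg.ofReal.bdd_mul (integrable_add_div_sub hσ hz).aestronglyMeasurable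
      ((ae_norm_eq_one hσ).mono fun _ ha => norm_add_div_sub_le ha hz)
  rw [← RCLike.re_to_complex, ← integral_re hint, toReal_poissonIntegral hz.le,
    integral_withDensity_eq_integral_toReal_smul₀ hg.abs.aemeasurable.ennreal_ofReal
      (Eventually.of_forall fun _ => ENNReal.ofReal_lt_top)]
  calc |∫ a, RCLike.re ((a + z) / (a - z) * (g a : ℂ)) ∂σ|
      = |∫ a, poissonK z a * g a ∂σ| := by
        refine congrArg _ (integral_congr_ae ((ae_norm_eq_one hσ).mono fun a ha => ?_))
        simp only [RCLike.re_to_complex, Complex.re_mul_ofReal, re_add_div_sub_eq_poissonK ha]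
    _ ≤ ∫ a, |poissonK z a * g a| ∂σ := abs_integral_le_integral_abs
    _ = ∫ a, (ENNReal.ofReal |g a|).toReal • poissonK z a ∂σ := by
        refine integral_congr_ae (Eventually.of_forall fun a => ?_)
        simp only [abs_mul, abs_of_nonneg (poissonK_nonneg hz.le a),
          ENNReal.toReal_ofReal (abs_nonneg _), smul_eq_mul, mul_comm]

end PoissonIntegral

section RadialEstimates

variable {μ ν : Measure ℂ} {ζ : ℂ} {r : ℝ}

lemma ofReal_inv_mul_measure_closedBall_le_poissonIntegral (hμ : μ unitCircleᶜ = 0)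
    (hζ : ‖ζ‖ = 1) (hr0 : 0 ≤ r) (hr1 : r < 1) :
    ENNReal.ofReal (1 - r)⁻¹ * μ (closedBall ζ (1 - r)) ≤ poissonIntegral μ ((r : ℂ) * ζ) :=
  calc ENNReal.ofReal (1 - r)⁻¹ * μ (closedBall ζ (1 - r))
      = ∫⁻ _ in closedBall ζ (1 - r), ENNReal.ofReal (1 - r)⁻¹ ∂μ := (setLIntegral_const _ _).symm
    _ ≤ ∫⁻ a in closedBall ζ (1 - r), ENNReal.ofReal (poissonK ((r : ℂ) * ζ) a) ∂μ :=
        setLIntegral_mono_ae (measurable_poissonK _).ennreal_ofReal.aemeasurable <|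
          (ae_norm_eq_one hμ).mono fun a ha haB => ENNReal.ofReal_le_ofReal <|
            inv_one_sub_le_poissonK ha hζ hr0 hr1 (by rwa [mem_closedBall, dist_eq_norm] at haB)
    _ ≤ poissonIntegral μ ((r : ℂ) * ζ) := setLIntegral_le_lintegral _ _

lemma measure_superlevel_poissonK {σ : Measure ℂ} (hσ : σ unitCircleᶜ = 0) (hζ : ‖ζ‖ = 1)
    (hr0 : 0 < r) (hr1 : r < 1) {t : ℝ} (ht : 0 < t) :
    σ {a | t ≤ poissonK ((r : ℂ) * ζ) a} =
      σ {a | ‖a - ζ‖ ^ 2 ≤ ((1 - r ^ 2) / t - (1 - r) ^ 2) / r} :=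
  measure_congr <| eventuallyEq_set.2 <| (ae_norm_eq_one hσ).mono fun _ ha =>
    le_poissonK_iff ha hζ hr0 hr1 ht

lemma poissonIntegral_le_of_measure_closedBall_le (hμ : μ unitCircleᶜ = 0)
    (hν : ν unitCircleᶜ = 0) (hζ : ‖ζ‖ = 1) {ε : ℝ≥0∞} {R : ℝ} (hR : 0 < R)
    (hball : ∀ s ∈ Ioc 0 R, ν (closedBall ζ s) ≤ ε * μ (closedBall ζ s))
    (hr0 : 0 < r) (hr1 : r < 1) :
    poissonIntegral ν ((r : ℂ) * ζ) ≤
      ε * poissonIntegral μ ((r : ℂ) * ζ) +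
        ENNReal.ofReal ((1 - r ^ 2) / (r * R ^ 2)) * ν univ := by
  have hz : ‖(r : ℂ) * ζ‖ ≤ 1 := by rw [norm_ofReal_mul_of_norm_eq_one hζ hr0.le]; exact hr1.le
  refine lintegral_ofReal_le_of_measure_superlevel_le (measurable_poissonK _)
    (.of_forall (poissonK_nonneg hz)) (.of_forall (poissonK_nonneg hz)) ε _ ?_
  -- only at the level `(1 + r) / (1 - r)`, the value at `ζ`, is the superlevel set `{ζ}`
  filter_upwards [Measure.ae_ne volume ((1 + r) / (1 - r))] with t htmax hTt
  have ht : 0 < t := lt_of_le_of_lt (div_nonneg (by nlinarith) (by positivity)) hTt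
  rw [measure_superlevel_poissonK hν hζ hr0 hr1 ht, measure_superlevel_poissonK hμ hζ hr0 hr1 ht]
  set q := ((1 - r ^ 2) / t - (1 - r) ^ 2) / r with hq
  rcases lt_trichotomy q 0 with hq0 | hq0 | hq0
  · have hempty : {a : ℂ | ‖a - ζ‖ ^ 2 ≤ q} = ∅ :=
      eq_empty_of_forall_notMem fun a ha => (hq0.trans_le (sq_nonneg _)).not_ge ha
    simp [hempty]
  · refine absurd ?_ htmax
    have h1 : 1 - r ^ 2 = (1 - r) ^ 2 * t := by
      rw [hq, div_eq_zero_iff, sub_eq_zero, div_eq_iff ht.ne'] at hq0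
      exact hq0.resolve_right hr0.ne'
    rw [eq_div_iff (sub_ne_zero.2 hr1.ne')]
    exact mul_left_cancel₀ (sub_ne_zero.2 hr1.ne') (by linear_combination -h1)
  · have hqR : q < R ^ 2 := by
      rw [div_lt_iff₀ (by positivity)] at hTt
      rw [hq, div_lt_iff₀ hr0, sub_lt_iff_lt_add, div_lt_iff₀ ht]
      nlinarith
    have hset : {a : ℂ | ‖a - ζ‖ ^ 2 ≤ q} = closedBall ζ (√q) := by
      ext a
      rw [mem_closedBall, dist_eq_norm]
      exact (Real.le_sqrt (norm_nonneg _) hq0.le).symm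
    rw [hset]
    refine hball _ ⟨Real.sqrt_pos.2 hq0, ?_⟩
    exact (Real.sqrt_le_sqrt hqR.le).trans (Real.sqrt_sq hR.le).le

end RadialEstimates

lemma circleM_compl_unitCircle : circleM unitCircleᶜ = 0 := by
  have hmeas : MeasurableSet unitCircleᶜ := isClosed_sphere.measurableSet.compl
  rw [circleM, Measure.smul_apply, circleLen, Measure.map_apply (by fun_prop) hmeas]
  simp [unitCircle, preimage, Complex.norm_exp_ofReal_mul_I]

instance : IsFiniteMeasure circleM := by
  have : IsFiniteMeasure circleLen := by rw [circleLen]; infer_instance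
  rw [circleM]
  exact Measure.smul_finite _ (by simp [Real.pi_pos])

lemma exists_mem_Ioc_exp_mul_I_eq {ζ : ℂ} (hζ : ‖ζ‖ = 1) :
    ∃ t : ℝ, t ∈ Ioc 0 (2 * Real.pi) ∧ exp (t * I) = ζ := by
  obtain ⟨θ, rfl⟩ := (Complex.norm_eq_one_iff ζ).1 hζ
  refine ⟨toIocMod Real.two_pi_pos 0 θ, by simpa using toIocMod_mem_Ioc Real.two_pi_pos 0 θ, ?_⟩
  rw [← self_sub_toIocDiv_zsmul, Complex.ofReal_sub, Complex.ofReal_zsmul, Complex.ofReal_mul,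
    Complex.ofReal_ofNat]
  exact Complex.exp_mul_I_periodic.sub_zsmul_eq _

lemma ofReal_div_two_pi_le_circleM_closedBall {ζ : ℂ} (hζ : ‖ζ‖ = 1) {s : ℝ} (hs0 : 0 < s)
    (hs1 : s ≤ 1) : ENNReal.ofReal (s / (2 * Real.pi)) ≤ circleM (closedBall ζ s) := by
  obtain ⟨t₀, ⟨ht₀, ht₀'⟩, rfl⟩ := exists_mem_Ioc_exp_mul_I_eq hζ
  have hπ := Real.pi_gt_three
  -- an interval of length `s` next to `t₀` inside `(0, 2π]`, on the side away from the ends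
  obtain ⟨J, hJvol, hJsub, hJdist⟩ : ∃ J : Set ℝ, volume J = ENNReal.ofReal s ∧
      J ⊆ Ioc 0 (2 * Real.pi) ∧ ∀ t ∈ J, |t - t₀| ≤ s := by
    by_cases h : Real.pi ≤ t₀
    · refine ⟨Ioc (t₀ - s) t₀, by simp, fun t ht => ⟨by linarith [ht.1], by linarith [ht.2]⟩,
        fun t ht => abs_le.2 ⟨by linarith [ht.1], by linarith [ht.2]⟩⟩
    · refine ⟨Ioc t₀ (t₀ + s), by simp, fun t ht => ⟨by linarith [ht.1], by linarith [ht.2]⟩,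
        fun t ht => abs_le.2 ⟨by linarith [ht.1], by linarith [ht.2]⟩⟩
  have hlen : ENNReal.ofReal s ≤ circleLen (closedBall (exp (t₀ * I)) s) := by
    rw [circleLen, Measure.map_apply (by fun_prop) measurableSet_closedBall,
      Measure.restrict_apply (measurableSet_closedBall.preimage (by fun_prop)), ← hJvol]
    refine measure_mono (subset_inter (fun t ht => ?_) hJsub)
    have := (lipschitzWith_circleMap 0 1).dist_le_mul t t₀
    simp only [circleMap, Real.dist_eq, zero_add, Complex.ofReal_one, one_mul, map_one,
      NNReal.coe_one] at this
    exact this.trans (hJdist t ht)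
  rw [circleM, Measure.smul_apply, smul_eq_mul, ENNReal.ofReal_div_of_pos Real.two_pi_pos,
    ENNReal.div_eq_inv_mul]
  exact mul_le_mul_right hlen _

lemma tendsto_one_sub_nhdsLT_one : Tendsto (fun r : ℝ => 1 - r) (𝓝[<] 1) (𝓝[>] 0) := by
  refine tendsto_nhdsWithin_of_tendsto_nhds_of_eventually_within _ ?_ ?_
  · simpa using ((continuous_sub_left (1 : ℝ)).tendsto 1).mono_left nhdsWithin_le_nhds
  · filter_upwards [self_mem_nhdsWithin] with r hr
    exact sub_pos.2 (mem_Iio.1 hr)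

lemma toReal_poissonIntegral_le_half_add {μ ν : Measure ℂ} [IsFiniteMeasure μ]
    [IsFiniteMeasure ν] (hμ : μ unitCircleᶜ = 0) (hν : ν unitCircleᶜ = 0) {ζ : ℂ} (hζ : ‖ζ‖ = 1)
    {R : ℝ} (hR : 0 < R)
    (hball : ∀ s ∈ Ioc 0 R, ν (closedBall ζ s) ≤ 2⁻¹ * μ (closedBall ζ s))
    {r : ℝ} (hr : r ∈ Ioo 2⁻¹ 1) :
    (poissonIntegral ν ((r : ℂ) * ζ)).toReal ≤
      2⁻¹ * (poissonIntegral μ ((r : ℂ) * ζ)).toReal + 2 / R ^ 2 * (ν univ).toReal := by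
  have hr0 : 0 < r := lt_trans (by norm_num) hr.1
  have hT : 0 ≤ (1 - r ^ 2) / (r * R ^ 2) := div_nonneg (by nlinarith [hr.2]) (by positivity)
  have hTR : (1 - r ^ 2) / (r * R ^ 2) ≤ 2 / R ^ 2 := by
    rw [div_le_div_iff₀ (by positivity) (by positivity)]
    nlinarith [hr.1]
  have hμ_top := poissonIntegral_ne_top hμ (norm_ofReal_mul_lt_one hζ ⟨hr0, hr.2⟩)
  have h1 : 2⁻¹ * poissonIntegral μ ((r : ℂ) * ζ) ≠ ∞ := ENNReal.mul_ne_top (by simp) hμ_top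
  have h2 : ENNReal.ofReal ((1 - r ^ 2) / (r * R ^ 2)) * ν univ ≠ ∞ :=
    ENNReal.mul_ne_top ENNReal.ofReal_ne_top (measure_ne_top _ _)
  have h := ENNReal.toReal_mono (ENNReal.add_ne_top.2 ⟨h1, h2⟩)
    (poissonIntegral_le_of_measure_closedBall_le hμ hν hζ hR hball hr0 hr.2)
  rw [ENNReal.toReal_add h1 h2, ENNReal.toReal_mul, ENNReal.toReal_mul,
    ENNReal.toReal_ofReal hT, ENNReal.toReal_inv, ENNReal.toReal_ofNat] at h
  nlinarith [mul_le_mul_of_nonneg_right hTR (ENNReal.toReal_nonneg : 0 ≤ (ν univ).toReal)]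

section RadialLimits

variable {μ ν : Measure ℂ} {ζ : ℂ}

lemma eventually_ofReal_mul_le_measure_closedBall (hζ : ‖ζ‖ = 1)
    (hmμ : Tendsto (fun s => circleM (closedBall ζ s) / μ (closedBall ζ s)) (𝓝[>] 0) (𝓝 0))
    {M : ℝ} (hM : 0 < M) : ∀ᶠ s in 𝓝[>] 0, ENNReal.ofReal (M * s) ≤ μ (closedBall ζ s) := by
  set c := ENNReal.ofReal (1 / (2 * Real.pi * M))
  have hc : 0 < c := ENNReal.ofReal_pos.2 (by positivity)
  filter_upwards [hmμ.eventually_lt_const hc, Ioo_mem_nhdsGT one_pos] with s hs hs1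
  have hle : circleM (closedBall ζ s) ≤ c * μ (closedBall ζ s) :=
    (ENNReal.div_le_iff_le_mul (.inr ENNReal.ofReal_ne_top) (.inr hc.ne')).1 hs.le
  calc ENNReal.ofReal (M * s) = ENNReal.ofReal (s / (2 * Real.pi)) / c := by
        rw [← ENNReal.ofReal_div_of_pos (by positivity)]
        congr 1
        field_simp
    _ ≤ μ (closedBall ζ s) := ENNReal.div_le_of_le_mul'
        ((ofReal_div_two_pi_le_circleM_closedBall hζ hs1.1 hs1.2.le).trans hle)

lemma tendsto_toReal_poissonIntegral_atTop [IsFiniteMeasure μ] (hμ : μ unitCircleᶜ = 0)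
    (hζ : ‖ζ‖ = 1)
    (hmμ : Tendsto (fun s => circleM (closedBall ζ s) / μ (closedBall ζ s)) (𝓝[>] 0) (𝓝 0)) :
    Tendsto (fun r : ℝ => (poissonIntegral μ ((r : ℂ) * ζ)).toReal) (𝓝[<] 1) atTop := by
  refine tendsto_atTop.2 fun M => ?_
  have hM : 0 < max M 1 := lt_max_of_lt_right one_pos
  filter_upwards [tendsto_one_sub_nhdsLT_one.eventually
      (eventually_ofReal_mul_le_measure_closedBall hζ hmμ hM), Ioo_mem_nhdsLT one_pos]
    with r hball hr
  have hr1 : 0 < 1 - r := sub_pos.2 hr.2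
  rw [← ENNReal.ofReal_le_iff_le_toReal
    (poissonIntegral_ne_top hμ (norm_ofReal_mul_lt_one hζ hr))]
  calc ENNReal.ofReal M ≤ ENNReal.ofReal (1 - r)⁻¹ * ENNReal.ofReal (max M 1 * (1 - r)) := by
        rw [← ENNReal.ofReal_mul (by positivity), mul_comm (max M 1), inv_mul_cancel_left₀ hr1.ne']
        exact ENNReal.ofReal_le_ofReal (le_max_left _ _)
    _ ≤ ENNReal.ofReal (1 - r)⁻¹ * μ (closedBall ζ (1 - r)) := mul_le_mul_right hball _
    _ ≤ poissonIntegral μ ((r : ℂ) * ζ) :=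
        ofReal_inv_mul_measure_closedBall_le_poissonIntegral hμ hζ hr.1.le hr.2

lemma tendsto_toReal_poissonIntegral_sub_atBot [IsFiniteMeasure μ] [IsFiniteMeasure ν]
    (hμ : μ unitCircleᶜ = 0) (hν : ν unitCircleᶜ = 0) (hζ : ‖ζ‖ = 1)
    (hνμ : Tendsto (fun s => ν (closedBall ζ s) / μ (closedBall ζ s)) (𝓝[>] 0) (𝓝 0))
    (hmμ : Tendsto (fun s => circleM (closedBall ζ s) / μ (closedBall ζ s)) (𝓝[>] 0) (𝓝 0)) :
    Tendsto (fun r : ℝ =>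
        (poissonIntegral ν ((r : ℂ) * ζ)).toReal - (poissonIntegral μ ((r : ℂ) * ζ)).toReal)
      (𝓝[<] 1) atBot := by
  obtain ⟨R, hR, hball⟩ : ∃ R > 0, ∀ s ∈ Ioc 0 R,
      ν (closedBall ζ s) ≤ 2⁻¹ * μ (closedBall ζ s) := by
    obtain ⟨R, hR, hsub⟩ := mem_nhdsGT_iff_exists_Ioc_subset.1
      (hνμ.eventually_le_const (by norm_num : (0 : ℝ≥0∞) < 2⁻¹))
    exact ⟨R, hR, fun s hs => (ENNReal.div_le_iff_le_mul (.inr (by simp)) (.inr (by simp))).1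
      (hsub hs)⟩
  set C := 2 / R ^ 2 * (ν univ).toReal
  have hbound : ∀ᶠ r : ℝ in 𝓝[<] 1,
      (poissonIntegral ν ((r : ℂ) * ζ)).toReal - (poissonIntegral μ ((r : ℂ) * ζ)).toReal ≤
        C + -(2⁻¹ * (poissonIntegral μ ((r : ℂ) * ζ)).toReal) := by
    filter_upwards [Ioo_mem_nhdsLT (by norm_num : (2⁻¹ : ℝ) < 1)] with r hr
    linarith [toReal_poissonIntegral_le_half_add hμ hν hζ hR hball hr]
  exact tendsto_atBot_mono' _ hbound <| tendsto_atBot_add_const_left _ C <|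
    tendsto_neg_atTop_atBot.comp <|
      (tendsto_toReal_poissonIntegral_atTop hμ hζ hmμ).const_mul_atTop (by norm_num)

end RadialLimits

lemma ae_tendsto_measure_closedBall_div_of_mutuallySingular {β : Type*} [MetricSpace β]
    [MeasurableSpace β] [BorelSpace β] [SecondCountableTopology β] [HasBesicovitchCovering β]
    {ρ μ : Measure β} [IsLocallyFiniteMeasure μ] [IsLocallyFiniteMeasure ρ] (h : ρ ⟂ₘ μ) :
    ∀ᵐ x ∂μ, Tendsto (fun s => ρ (closedBall x s) / μ (closedBall x s)) (𝓝[>] 0) (𝓝 0) := by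
  filter_upwards [Besicovitch.ae_tendsto_rnDeriv ρ μ, (Measure.rnDeriv_eq_zero ρ μ).2 h]
    with x hx h0
  rwa [h0] at hx

theorem ae_tendsto_toReal_poissonIntegral_sub_atBot {μ ν : Measure ℂ} [IsFiniteMeasure μ]
    [IsFiniteMeasure ν] (hμ : μ unitCircleᶜ = 0) (hν : ν unitCircleᶜ = 0) (hνμ : ν ⟂ₘ μ)
    (hmμ : circleM ⟂ₘ μ) :
    ∀ᵐ ζ ∂μ, Tendsto (fun r : ℝ =>
        (poissonIntegral ν ((r : ℂ) * ζ)).toReal - (poissonIntegral μ ((r : ℂ) * ζ)).toReal)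
      (𝓝[<] 1) atBot := by
  filter_upwards [ae_norm_eq_one hμ, ae_tendsto_measure_closedBall_div_of_mutuallySingular hνμ,
    ae_tendsto_measure_closedBall_div_of_mutuallySingular hmμ] with ζ hζ h1 h2
  exact tendsto_toReal_poissonIntegral_sub_atBot hμ hν hζ h1 h2

lemma re_exponent_mem_Icc {μ₁ μ₂ σ : Measure ℂ} [IsFiniteMeasure μ₁] [IsFiniteMeasure μ₂]
    [IsFiniteMeasure σ] (hμ₁ : μ₁ unitCircleᶜ = 0) (hμ₂ : μ₂ unitCircleᶜ = 0)
    (hσ : σ unitCircleᶜ = 0) {g : ℂ → ℝ} (hg : Integrable g σ) {z : ℂ} (hz : ‖z‖ < 1) :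
    (-(∫ ζ, (ζ + z) / (ζ - z) ∂μ₁) + (∫ ζ, (ζ + z) / (ζ - z) ∂μ₂) +
        ∫ ζ, ((ζ + z) / (ζ - z)) * (g ζ : ℂ) ∂σ).re ∈
      Icc ((poissonIntegral μ₂ z).toReal -
          (poissonIntegral (μ₁ + σ.withDensity fun a => ENNReal.ofReal |g a|) z).toReal)
        ((poissonIntegral (μ₂ + σ.withDensity fun a => ENNReal.ofReal |g a|) z).toReal -
          (poissonIntegral μ₁ z).toReal) := by
  have : IsFiniteMeasure (σ.withDensity fun a => ENNReal.ofReal |g a|) :=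
    isFiniteMeasure_withDensity_ofReal hg.abs.hasFiniteIntegral
  have hw := withDensity_absolutelyContinuous σ (fun a => ENNReal.ofReal |g a|) hσ
  have hg_le := abs_le.1 (abs_re_integral_add_div_sub_mul_le hσ hg hz)
  rw [add_re, add_re, neg_re, re_integral_add_div_sub hμ₁ hz, re_integral_add_div_sub hμ₂ hz,
    toReal_poissonIntegral_add hμ₁ hw hz, toReal_poissonIntegral_add hμ₂ hw hz]
  constructor <;> linarith [hg_le.1, hg_le.2]

/-- with `S_{μᵢ}` the singular inner functions of mutually singular
singular measures `μ₁, μ₂` on the circle and `O` the outer function of a real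
`g ∈ L¹(∂𝔻, m)`, the function `f = (S_{μ₁}/S_{μ₂})·O` has radial limit `0` at `μ₁`-a.e.
point and radial limit `∞` (in modulus) at `μ₂`-a.e. point. -/
theorem stmt12 (μ₁ μ₂ : Measure ℂ) [IsFiniteMeasure μ₁] [IsFiniteMeasure μ₂]
    (hμ₁circ : μ₁ unitCircleᶜ = 0) (hμ₂circ : μ₂ unitCircleᶜ = 0)
    (hsing₁ : MeasureTheory.Measure.MutuallySingular μ₁ circleM)
    (hsing₂ : MeasureTheory.Measure.MutuallySingular μ₂ circleM)
    (hmut : MeasureTheory.Measure.MutuallySingular μ₁ μ₂)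
    (g : ℂ → ℝ) (hg : Integrable g circleM)
    (f : ℂ → ℂ)
    (hf : ∀ z : ℂ, f z = Complex.exp
      (-(∫ ζ, (ζ + z) / (ζ - z) ∂μ₁) + (∫ ζ, (ζ + z) / (ζ - z) ∂μ₂) +
        ∫ ζ, ((ζ + z) / (ζ - z)) * (g ζ : ℂ) ∂circleM)) :
    (∀ᵐ ζ ∂μ₁,
      Filter.Tendsto (fun r : ℝ => f ((r : ℂ) * ζ)) (𝓝[<] (1:ℝ)) (𝓝 0)) ∧
    (∀ᵐ ζ ∂μ₂,
      Filter.Tendsto (fun r : ℝ => ‖f ((r : ℂ) * ζ)‖) (𝓝[<] (1:ℝ)) atTop) := by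
  set w := circleM.withDensity fun a => ENNReal.ofReal |g a|
  have : IsFiniteMeasure w := isFiniteMeasure_withDensity_ofReal hg.abs.hasFiniteIntegral
  have hwm : w ≪ circleM := withDensity_absolutelyContinuous _ _
  have hw : w unitCircleᶜ = 0 := hwm circleM_compl_unitCircle
  have hre (ζ : ℂ) (hζ : ‖ζ‖ = 1) (r : ℝ) (hr : r ∈ Ioo 0 1) :=
    re_exponent_mem_Icc hμ₁circ hμ₂circ circleM_compl_unitCircle hg (norm_ofReal_mul_lt_one hζ hr)
  constructor
  · filter_upwards [ae_norm_eq_one hμ₁circ, ae_tendsto_toReal_poissonIntegral_sub_atBot hμ₁circ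
      (by simp [hμ₂circ, hw]) (hmut.symm.add_left (hsing₁.symm.mono_ac hwm .rfl)) hsing₁.symm]
      with ζ hζ hlim
    refine tendsto_zero_iff_norm_tendsto_zero.2 <|
      squeeze_zero' (.of_forall fun _ => norm_nonneg _) ?_ (Real.tendsto_exp_atBot.comp hlim)
    filter_upwards [Ioo_mem_nhdsLT one_pos] with r hr
    rw [hf, Complex.norm_exp]
    exact Real.exp_le_exp.2 (hre ζ hζ r hr).2
  · filter_upwards [ae_norm_eq_one hμ₂circ, ae_tendsto_toReal_poissonIntegral_sub_atBot hμ₂circ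
      (by simp [hμ₁circ, hw]) (hmut.add_left (hsing₂.symm.mono_ac hwm .rfl)) hsing₂.symm]
      with ζ hζ hlim
    refine tendsto_atTop_mono' _ ?_
      (Real.tendsto_exp_atTop.comp (tendsto_neg_atBot_atTop.comp hlim))
    filter_upwards [Ioo_mem_nhdsLT one_pos] with r hr
    rw [hf, Complex.norm_exp, Function.comp_apply, Function.comp_apply, neg_sub]
    exact Real.exp_le_exp.2 (hre ζ hζ r hr).1
end

section
/- Let F be an inner function, let V be a Jordan domain whose closure is contained in 𝔻, and let U be a connected component of F⁻¹(V) ⊆ 𝔻. Then the domains U and ℂ ∖ closure(U) have the same topological boundary: ∂U = ∂(ℂ ∖ closure(U)). -/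
/-!
Since `U` is open, it suffices that `U` is regular open: `interior (closure U) ⊆ U`. A point `z`
of `interior (closure U) \ U` would have `F z ∈ ∂V`, `U` being a component of the open set
`𝔻 ∩ F⁻¹(V)`, while by the open mapping theorem `F z` is interior to `closure V`.

This is impossible for a Jordan domain. If `w ∈ ∂V` were interior to `closure V`, then
`K = ∂(closure V)` would be a closed subset of the Jordan curve `∂V` missing `w`, hence lie on an
arc, so `z - w` would have a continuous logarithm on `K`. By Borsuk's argument the component of
`w` in `ℂ ∖ K` is then unbounded, whereas it lies in `closure V`.
-/

open MeasureTheory Filter Set Metric Topology Complex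
open scoped ENNReal

open scoped Real

theorem exists_continuous_exp_eq {X : Type*} [TopologicalSpace X] [SimplyConnectedSpace X]
    [LocallyPathConnectedSpace X] (f : C(X, ℂ)) (hf : ∀ x, f x ≠ 0) :
    ∃ L : C(X, ℂ), ∀ x, Complex.exp (L x) = f x := by
  obtain ⟨x₀⟩ := (inferInstance : Nonempty X)
  obtain ⟨L, ⟨-, hL⟩, -⟩ := Complex.isCoveringMapOn_exp.existsUnique_continuousMap_lifts f
    (Complex.exp_log (hf x₀)) hf
  exact ⟨L, congrFun hL⟩

theorem exists_continuousOn_exp_eq_of_sphere_compl {E : Type*} [NormedAddCommGroup E]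
    [InnerProductSpace ℝ E] {n : ℕ} [Fact (Module.finrank ℝ E = n + 1)] (v : sphere (0 : E) 1)
    {h : sphere (0 : E) 1 → ℂ} (hc : ContinuousOn h {v}ᶜ) (h0 : ∀ x ≠ v, h x ≠ 0) :
    ∃ Λ : sphere (0 : E) 1 → ℂ, ContinuousOn Λ {v}ᶜ ∧ ∀ x ≠ v, Complex.exp (Λ x) = h x := by
  set e := stereographic' n v
  have hs : e.source = {v}ᶜ := stereographic'_source v
  have he : ∀ y, e.symm y ∈ ({v}ᶜ : Set (sphere (0 : E) 1)) := fun y ↦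
    hs ▸ e.map_target (by simp [e])
  obtain ⟨L, hL⟩ := exists_continuous_exp_eq
    ⟨h ∘ e.symm, hc.comp_continuous (by simpa [e] using e.continuousOn_symm) he⟩
    fun y ↦ h0 _ (he y)
  refine ⟨L ∘ e, L.continuous.comp_continuousOn (hs ▸ e.continuousOn), fun x hx ↦ ?_⟩
  simpa [e.left_inv (by rwa [hs] : x ∈ e.source)] using hL (e x)

theorem not_exists_continuousOn_exp_eq_sub_on_sphere (w : ℂ) {R : ℝ} (hR : 0 < R) :
    ¬ ∃ L : ℂ → ℂ, ContinuousOn L (sphere w R) ∧ ∀ z ∈ sphere w R, Complex.exp (L z) = z - w := by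
  rintro ⟨L, hLc, hL⟩
  set c : ℝ → ℂ := fun t ↦ w + R * Complex.exp (t * I)
  have hc : ∀ t, c t ∈ sphere w R := fun t ↦ by
    simp [c, Complex.norm_exp_ofReal_mul_I, abs_of_pos hR]
  -- `L ∘ c` and `t ↦ log R + t i` both lift `c - w`, so they differ by a constant in `2πiℤ`;
  -- but only the first is `2π`-periodic.
  set δ : ℝ → ℂ := fun t ↦ L (c t) - (Real.log R + t * I)
  have hδ : MapsTo δ univ (AddSubgroup.zmultiples (2 * π * I)) := fun t _ ↦ by
    have h1 : Complex.exp (δ t) = 1 := by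
      rw [Complex.exp_sub, hL _ (hc t), Complex.exp_add, ← Complex.ofReal_exp, Real.exp_log hR]
      simp only [c, add_sub_cancel_left]
      exact div_self (by simp [hR.ne'])
    obtain ⟨n, hn⟩ := Complex.exp_eq_one_iff.mp h1
    exact AddSubgroup.mem_zmultiples_iff.mpr ⟨n, by simp [hn]⟩
  have hδc : Continuous δ := (hLc.comp_continuous (by fun_prop) hc).sub (by fun_prop)
  have := isPreconnected_univ.constant_of_mapsTo
    (SetLike.isDiscrete_iff_discreteTopology.mpr inferInstance) hδc.continuousOn hδ
    (mem_univ 0) (mem_univ (2 * π))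
  have hc2π : c (2 * π) = c 0 := by simp [c, Complex.exp_two_pi_mul_I]
  simp [δ, hc2π, Real.pi_ne_zero, Complex.I_ne_zero] at this

section Components

variable {X : Type*} [TopologicalSpace X] [LocallyConnectedSpace X] {S : Set X}

theorem IsOpen.mem_connectedComponentIn_of_mem_closure (hS : IsOpen S) {x z : X} (hz : z ∈ S)
    (hzx : z ∈ closure (connectedComponentIn S x)) : z ∈ connectedComponentIn S x := by
  obtain ⟨u, huz, hux⟩ := mem_closure_iff_nhds.mp hzx _
    (hS.connectedComponentIn.mem_nhds (mem_connectedComponentIn hz))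
  rw [connectedComponentIn_eq hux, ← connectedComponentIn_eq huz]
  exact mem_connectedComponentIn hz

theorem IsOpen.frontier_connectedComponentIn_subset (hS : IsOpen S) (x : X) :
    frontier (connectedComponentIn S x) ⊆ Sᶜ := fun z hz hzS ↦ by
  rw [hS.connectedComponentIn.frontier_eq] at hz
  exact hz.2 (hS.mem_connectedComponentIn_of_mem_closure hzS hz.1)

end Components

theorem not_isBounded_connectedComponentIn_of_exp_eq_sub {K : Set ℂ} (hK : IsClosed K) {w : ℂ}
    (hwK : w ∉ K) {g : ℂ → ℂ} (hg : Continuous g) (hgK : ∀ z ∈ K, Complex.exp (g z) = z - w) :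
    ¬ Bornology.IsBounded (connectedComponentIn Kᶜ w) := by
  classical
  intro hb
  set C := connectedComponentIn Kᶜ w
  obtain ⟨R, hCR⟩ := hb.subset_ball w
  have hR : 0 < R := pos_of_mem_ball (hCR (mem_connectedComponentIn hwK))
  -- Patching `exp ∘ g` inside `C` with `z - w` outside gives a nonvanishing function on `ℂ`,
  -- which has a logarithm; on a circle around `C` that is a logarithm of `z - w`.
  set G : ℂ → ℂ := C.piecewise (fun z ↦ Complex.exp (g z)) (· - w)
  have hGc : Continuous G := by
    refine Continuous.piecewise (fun z hz ↦ ?_) (by fun_prop) (by fun_prop)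
    simpa using hgK z (compl_compl K ▸ hK.isOpen_compl.frontier_connectedComponentIn_subset w hz)
  have hG0 : ∀ z, G z ≠ 0 := fun z ↦ by
    by_cases hz : z ∈ C
    · simp [G, hz, Complex.exp_ne_zero]
    · simpa [G, hz, sub_eq_zero] using fun h : z = w ↦ hz (h ▸ mem_connectedComponentIn hwK)
  obtain ⟨L, hL⟩ := exists_continuous_exp_eq ⟨G, hGc⟩ hG0
  refine not_exists_continuousOn_exp_eq_sub_on_sphere w hR
    ⟨L, L.continuous.continuousOn, fun z hz ↦ ?_⟩
  have hzC : z ∉ C := fun h ↦ (mem_ball.mp (hCR h)).ne (mem_sphere.mp hz)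
  simpa [G, hzC] using hL z

theorem exists_continuous_exp_eq_sub_of_subset_image_sphere {f : ℂ → ℂ}
    (hf : ContinuousOn f (sphere 0 1)) (hinj : InjOn f (sphere 0 1)) {K : Set ℂ}
    (hK : IsClosed K) (hKf : K ⊆ f '' sphere 0 1) {w : ℂ} (hw : w ∈ f '' sphere 0 1)
    (hwK : w ∉ K) : ∃ g : ℂ → ℂ, Continuous g ∧ ∀ z ∈ K, Complex.exp (g z) = z - w := by
  obtain ⟨v, hv, rfl⟩ := hw
  set φ : sphere (0 : ℂ) 1 → ℂ := (sphere 0 1).domRestrict f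
  have hφinj : Function.Injective φ := fun x y h ↦ Subtype.ext (hinj x.2 y.2 h)
  have hφ : IsClosedEmbedding φ := hf.domRestrict.isClosedEmbedding hφinj
  set v' : sphere (0 : ℂ) 1 := ⟨v, hv⟩
  have := finrank_real_complex_fact'
  obtain ⟨Λ, hΛc, hΛ⟩ := exists_continuousOn_exp_eq_of_sphere_compl (n := 1) v'
    (h := fun x ↦ φ x - φ v') (hf.domRestrict.sub continuous_const).continuousOn
    fun x hx ↦ sub_ne_zero.mpr fun h ↦ hx (hφinj h)
  set A : Set (sphere (0 : ℂ) 1) := φ ⁻¹' K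
  have hAv : A ⊆ {v'}ᶜ := fun x hx hxv ↦ hwK (by rwa [mem_singleton_iff.mp hxv] at hx)
  obtain ⟨g, hg⟩ := ContinuousMap.exists_extension'
    (hφ.comp ((hK.preimage hφ.continuous).isClosedEmbedding_subtypeVal))
    ⟨A.domRestrict Λ, (hΛc.mono hAv).domRestrict⟩
  refine ⟨g, g.continuous, fun z hz ↦ ?_⟩
  obtain ⟨x, hx, rfl⟩ := hKf hz
  have hgx : g (f x) = Λ ⟨x, hx⟩ := congrFun hg ⟨⟨x, hx⟩, hz⟩
  have hxv : (⟨x, hx⟩ : sphere (0 : ℂ) 1) ≠ v' := fun h ↦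
    hwK (by obtain rfl : x = v := congrArg Subtype.val h; exact hz)
  rw [hgx, hΛ _ hxv]
  rfl

theorem disjoint_frontier_interior_closure_of_isJordanCurve {V : Set ℂ}
    (hb : Bornology.IsBounded V) (hJ : IsJordanCurve (frontier V)) :
    Disjoint (frontier V) (interior (closure V)) := by
  refine disjoint_left.mpr fun w (hwJ : w ∈ frontier V) hwi ↦ ?_
  obtain ⟨f, hfc, hfi, hfJ⟩ := hJ
  set K := frontier (closure V)
  have hwK : w ∉ K := fun h ↦ h.2 hwi
  obtain ⟨g, hg, hgK⟩ := exists_continuous_exp_eq_sub_of_subset_image_sphere hfc hfi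
    isClosed_frontier (hfJ ▸ frontier_closure_subset) (hfJ ▸ hwJ) hwK
  refine not_isBounded_connectedComponentIn_of_exp_eq_sub isClosed_frontier hwK hg hgK
    (hb.closure.subset (Subset.trans ?_ interior_subset))
  refine isPreconnected_connectedComponentIn.subset_of_closure_inter_subset isOpen_interior
    ⟨w, mem_connectedComponentIn hwK, hwi⟩ fun z ⟨hz, hzC⟩ ↦ ?_
  have hzV : z ∈ closure V := closure_minimal interior_subset isClosed_closure hz
  by_contra hzi
  exact connectedComponentIn_subset _ _ hzC ⟨subset_closure hzV, hzi⟩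

theorem mapsTo_interior_closure_inter_of_isOpenMap_on {X Y : Type*} [TopologicalSpace X]
    [TopologicalSpace Y] {F : X → Y} {Ω U : Set X} {V : Set Y} (hΩ : IsOpen Ω)
    (hc : ContinuousOn F Ω) (ho : ∀ s ⊆ Ω, IsOpen s → IsOpen (F '' s)) (hUV : MapsTo F U V) :
    MapsTo F (interior (closure U) ∩ Ω) (interior (closure V)) := by
  refine fun z hz ↦ interior_maximal ?_ (ho _ inter_subset_right (isOpen_interior.inter hΩ))
    (mem_image_of_mem F hz)
  rintro _ ⟨x, ⟨hxU, hxΩ⟩, rfl⟩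
  exact closure_mono hUV.image_subset <|
    (hc.continuousAt (hΩ.mem_nhds hxΩ)).continuousWithinAt.mem_closure_image
      (interior_subset hxU)

theorem IsOpen.frontier_eq_frontier_compl_closure {X : Type*} [TopologicalSpace X] {U : Set X}
    (hU : IsOpen U) (hreg : interior (closure U) ⊆ U) : frontier U = frontier (closure U)ᶜ := by
  rw [frontier_compl, isClosed_closure.frontier_eq,
    hreg.antisymm (interior_maximal subset_closure hU), hU.frontier_eq]

theorem stmt14_general (F : ℂ → ℂ) (hF : IsInner F)
    (V : Set ℂ) (hV : IsJordanDomain V)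
    (U : Set ℂ) (z₀ : ℂ) (hz₀ : z₀ ∈ unitDisk ∩ F ⁻¹' V)
    (hU : U = connectedComponentIn (unitDisk ∩ F ⁻¹' V) z₀) :
    frontier U = frontier (closure U)ᶜ := by
  obtain ⟨hFd, -, -⟩ := hF
  obtain ⟨hVo, -, hVb, -, hVJ⟩ := hV
  have hDo : IsOpen unitDisk := isOpen_ball
  have hS : IsOpen (unitDisk ∩ F ⁻¹' V) := hFd.continuousOn.isOpen_inter_preimage hDo hVo
  subst hU
  refine hS.connectedComponentIn.frontier_eq_frontier_compl_closure fun z hz ↦ ?_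
  have hzD : z ∈ unitDisk := by
    have := interior_mono
      (closure_mono ((connectedComponentIn_subset _ _).trans inter_subset_left)) hz
    rwa [unitDisk, closure_ball _ one_ne_zero, interior_closedBall _ one_ne_zero] at this
  by_cases hFz : F z ∈ V
  · exact hS.mem_connectedComponentIn_of_mem_closure ⟨hzD, hFz⟩ (interior_subset hz)
  rcases (hFd.analyticOnNhd hDo).is_constant_or_isOpen (convex_ball 0 1).isPreconnected with
    ⟨c, hc⟩ | hFo
  · exact absurd (hc z hzD ▸ hc z₀ hz₀.1 ▸ hz₀.2) hFz
  have hFzi := mapsTo_interior_closure_inter_of_isOpenMap_on hDo hFd.continuousOn hFo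
    (fun x hx ↦ (connectedComponentIn_subset _ _ hx).2) ⟨hz, hzD⟩
  exact (disjoint_left.mp (disjoint_frontier_interior_closure_of_isJordanCurve hVb hVJ)
    (hVo.frontier_eq ▸ ⟨interior_subset hFzi, hFz⟩) hFzi).elim

/-- if `F` is inner, `V` a Jordan domain compactly contained in `𝔻`, and
`U` a connected component of `F⁻¹(V) ⊆ 𝔻`, then `∂U = ∂(ℂ ∖ closure U)`. -/
theorem stmt14 (F : ℂ → ℂ) (hF : IsInner F)
    (V : Set ℂ) (hV : IsJordanDomain V) (hVsub : closure V ⊆ unitDisk)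
    (U : Set ℂ) (z₀ : ℂ) (hz₀ : z₀ ∈ unitDisk ∩ F ⁻¹' V)
    (hU : U = connectedComponentIn (unitDisk ∩ F ⁻¹' V) z₀) :
    frontier U = frontier (closure U)ᶜ :=
  stmt14_general F hF V hV U z₀ hz₀ hU
end
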